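/- arXiv:1501.01135 — 4 statements merged into one kernel-verified Lean document; each statement's English description precedes it below -/
import Mathlib

section
/- Let k and r be positive integers and p = (p_1,…,p_k) a tuple of non-negative integers. Then the cardinality of M_{p,r} equals the coefficient of the monomial x_1^{p_1} x_2^{p_2} ⋯ x_k^{p_k} in the polynomial ( ∏_{i=1}^{k} (x_i + 1) − ∏_{i=1}^{k} x_i )^r, viewed as a polynomial in the k variables x_1,…,x_k with integer coefficients. -/
open Finset

/-- The cyclic interval `]i,j]` of `[k] = {1,…,k}`, realized inside `ZMod k`
(the element `k` of `[k]` is represented by `0 : ZMod k`). -/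
def cyc (k : ℕ) [NeZero k] (i j : ZMod k) : Finset (ZMod k) :=
  Finset.univ.filter fun x => 1 ≤ (x - i).val ∧ (x - i).val ≤ (j - i).val

/-- Membership in `𝒮_{p,r}` : each `j ∈ [k]` belongs to exactly `p j` of the sets `S_1,…,S_r`. -/
def SprMem (k r : ℕ) [NeZero k] (p : ZMod k → ℕ) (S : Fin r → Finset (ZMod k)) : Prop :=
  ∀ j : ZMod k, Nat.card {i : Fin r // j ∈ S i} = p j

/-- Membership in `ℳ_{p,r}` : member of `𝒮_{p,r}` all of whose sets are proper subsets of `[k]`. -/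
def MprMem (k r : ℕ) [NeZero k] (p : ZMod k → ℕ) (S : Fin r → Finset (ZMod k)) : Prop :=
  SprMem k r p S ∧ ∀ i, S i ≠ Finset.univ

/-- `|ℳ_{p,r}|`. -/
noncomputable def Mcard (k r : ℕ) [NeZero k] (p : ZMod k → ℕ) : ℕ :=
  Nat.card {S : Fin r → Finset (ZMod k) // MprMem k r p S}

/-- `|𝒮_{p,r}|`. -/
noncomputable def Scard (k r : ℕ) [NeZero k] (p : ZMod k → ℕ) : ℕ :=
  Nat.card {S : Fin r → Finset (ZMod k) // SprMem k r p S}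

/-- `|ℳ_{q,r}|` for an integer-valued tuple `q` (empty if some entry of `q` is negative). -/
noncomputable def McardZ (k r : ℕ) [NeZero k] (q : ZMod k → ℤ) : ℕ :=
  Nat.card {S : Fin r → Finset (ZMod k) //
    (∀ j : ZMod k, (Nat.card {i : Fin r // j ∈ S i} : ℤ) = q j) ∧ ∀ i, S i ≠ Finset.univ}

/-- `alphaRel k S i j` holds iff `j = α(i,S)`. -/
def alphaRel (k : ℕ) [NeZero k] (S : Finset (ZMod k)) (i j : ZMod k) : Prop :=
  if S = Finset.univ then j = i else j ∉ S ∧ cyc k i (j - 1) ⊆ S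

/-- `betaRel k S i j` holds iff `j = β(i,S)`. -/
def betaRel (k : ℕ) [NeZero k] (S : Finset (ZMod k)) (i j : ZMod k) : Prop :=
  if S = Finset.univ then j = i else j + 1 ∉ S ∧ cyc k i j ⊆ S

/-- `gammaRel k S i j` holds iff `j = γ(i,S)`. -/
def gammaRel (k : ℕ) [NeZero k] (S : Finset (ZMod k)) (i j : ZMod k) : Prop :=
  if S = Finset.univ then j = i
  else if i ∈ S then j = i - 1
  else j + 1 ∉ S ∧ cyc k i j ⊆ S

/-- The digraph on `[k]` with the `k-1` arcs `(i, ζ(i, S_{f i}))` for `i ∈ [k-1]`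
(the nonzero elements of `ZMod k`) is a tree, i.e. a spanning tree oriented toward
the root `k` (represented by `0`): following the arcs from any vertex reaches the root. -/
def GIsTree (k r : ℕ) [NeZero k] (zeta : Finset (ZMod k) → ZMod k → ZMod k → Prop)
    (S : Fin r → Finset (ZMod k)) (f : {i : ZMod k // i ≠ 0} → Fin r) : Prop :=
  ∃ g : ZMod k → ZMod k, g 0 = 0 ∧
    (∀ i : {i : ZMod k // i ≠ 0}, zeta (S (f i)) i.1 (g i.1)) ∧
    ∀ x : ZMod k, ∃ n : ℕ, g^[n] x = 0

/-- Sample space: pairs of a tuple `S ∈ ℳ_{p,r}` and a surjection `f : [k-1] → [r]`,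
with the uniform probability measure. -/
abbrev OmM (k r : ℕ) [NeZero k] (p : ZMod k → ℕ) : Type :=
  {om : (Fin r → Finset (ZMod k)) × ({i : ZMod k // i ≠ 0} → Fin r) //
    MprMem k r p om.1 ∧ Function.Surjective om.2}

/-- Sample space `Ω`: pairs of a tuple `S ∈ 𝒮_{p,r}` and a surjection `f : [k-1] → [r]`,
with the uniform probability measure. -/
abbrev OmS (k r : ℕ) [NeZero k] (p : ZMod k → ℕ) : Type :=
  {om : (Fin r → Finset (ZMod k)) × ({i : ZMod k // i ≠ 0} → Fin r) //
    SprMem k r p om.1 ∧ Function.Surjective om.2}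

/-- Uniform probability of an event `A` in a (finite) sample space `Om`. -/
noncomputable def PrU {Om : Type} (A : Set Om) : ℚ :=
  (Nat.card A : ℚ) / (Nat.card Om : ℚ)

/-- The `Pr`-determinant of a `k × k` matrix of events (rows and columns indexed by
`[k]`, i.e. by `ZMod k`). -/
noncomputable def Pdet {k : ℕ} [NeZero k] {Om : Type} (E : ZMod k → ZMod k → Set Om) : ℚ :=
  ∑ pi : Equiv.Perm (ZMod k), ((Equiv.Perm.sign pi : ℤ) : ℚ) * PrU (⋂ i : ZMod k, E i (pi i))

/-- The matrix of events `M_α`: `M_{α,i,j} = I^{f(i)}_{i,j}` for `i ∈ [k-1]`, and the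
row of `i = k` (i.e. `0`) is constant equal to `Ω`. -/
def Malpha (k r : ℕ) [NeZero k] (p : ZMod k → ℕ) (i j : ZMod k) : Set (OmS k r p) :=
  {om : OmS k r p | ∀ hi : i ≠ 0, cyc k i j ⊆ om.1.1 (om.1.2 ⟨i, hi⟩)}

/-- The matrix of events `M_β`: `M_{β,i,j} = J^{f(i)}_{i,j+1}` for `i ∈ [k-1]`, and the
row of `i = k` (i.e. `0`) is constant equal to `Ω`. -/
def Mbeta (k r : ℕ) [NeZero k] (p : ZMod k → ℕ) (i j : ZMod k) : Set (OmS k r p) :=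
  {om : OmS k r p | ∀ hi : i ≠ 0,
    if i = j + 1 then om.1.1 (om.1.2 ⟨i, hi⟩) = Finset.univ
    else cyc k i (j + 1) ⊆ om.1.1 (om.1.2 ⟨i, hi⟩)}

/-- Membership of `om` in the event `J^{f(i)}_{a,b}`. -/
def Jmem (k r : ℕ) [NeZero k] (p : ZMod k → ℕ) (om : OmS k r p)
    (i : {i : ZMod k // i ≠ 0}) (a b : ZMod k) : Prop :=
  if a = b then om.1.1 (om.1.2 i) = Finset.univ else cyc k a b ⊆ om.1.1 (om.1.2 i)

/-!
Expanding `∏ (x_i + 1)` over subsets of `[k]` shows that `∏ (x_i + 1) - ∏ x_i` is the sum of the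
squarefree monomials `x^t` over the proper subsets `t ⊊ [k]`. Its `r`-th power is therefore the sum
of `x^{t_1} ⋯ x^{t_r}` over all `r`-tuples of proper subsets, and the exponent of `x_j` in this
product is the number of `t_i` containing `j`. So the coefficient of `x^p` counts exactly `M_{p,r}`.
-/

noncomputable def coverDegree {ι σ : Type*} [Fintype ι] [DecidableEq σ] (S : ι → Finset σ) :
    σ →₀ ℕ :=
  ∑ j, ∑ i ∈ S j, Finsupp.single i 1

theorem coverDegree_apply {ι σ : Type*} [Fintype ι] [DecidableEq σ] (S : ι → Finset σ) (a : σ) :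
    coverDegree S a = #{j | a ∈ S j} := by
  simp only [coverDegree, Finsupp.finsetSum_apply, Finsupp.single_apply, sum_ite_eq', sum_boole,
    Nat.cast_id]

namespace MvPolynomial

variable {σ R : Type*}

theorem prod_X_add_one_sub_prod_X [Fintype σ] [DecidableEq σ] [CommRing R] :
    (∏ i, (X i + 1) : MvPolynomial σ R) - ∏ i, X i =
      ∑ t ∈ univ.powerset.erase univ, ∏ i ∈ t, X i := by
  rw [prod_add_one, sum_erase_eq_sub (mem_powerset_self _)]

theorem prod_prod_X_eq_monomial {ι : Type*} [Fintype ι] [DecidableEq σ] [CommSemiring R]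
    (S : ι → Finset σ) :
    ∏ j, ∏ i ∈ S j, (X i : MvPolynomial σ R) = monomial (coverDegree S) 1 := by
  simp only [coverDegree, monomial_sum_one]
  rfl

theorem coeff_sum_prod_X_pow [DecidableEq σ] [CommSemiring R] (P : Finset (Finset σ)) (r : ℕ)
    (m : σ →₀ ℕ) :
    coeff m ((∑ t ∈ P, ∏ i ∈ t, X i : MvPolynomial σ R) ^ r) =
      #{S ∈ Fintype.piFinset fun _ : Fin r => P | coverDegree S = m} := by
  rw [← Fin.prod_const, prod_univ_sum, coeff_sum]
  simp only [prod_prod_X_eq_monomial, coeff_monomial, sum_boole]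

end MvPolynomial

theorem sprMem_iff_coverDegree_eq (k r : ℕ) [NeZero k] (p : ZMod k → ℕ)
    (S : Fin r → Finset (ZMod k)) :
    SprMem k r p S ↔ coverDegree S = Finsupp.equivFunOnFinite.symm p := by
  simp only [SprMem, Finsupp.ext_iff, coverDegree_apply, Nat.card_eq_fintype_card,
    Fintype.card_subtype, Finsupp.coe_equivFunOnFinite_symm]

theorem Mcard_eq_card_filter (k r : ℕ) [NeZero k] (p : ZMod k → ℕ) :
    Mcard k r p = #{S ∈ Fintype.piFinset fun _ : Fin r => univ.powerset.erase univ |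
      coverDegree S = Finsupp.equivFunOnFinite.symm p} := by
  classical
  rw [Mcard, Nat.card_eq_fintype_card, Fintype.card_subtype]
  congr 1
  ext S
  simp [MprMem, sprMem_iff_coverDegree_eq, and_comm]

theorem Mcard_eq_coeff_general (k r : ℕ) [NeZero k] (p : ZMod k → ℕ) :
    (Mcard k r p : ℤ) =
    MvPolynomial.coeff (Finsupp.equivFunOnFinite.symm p)
      ((((∏ i : ZMod k, (MvPolynomial.X i + 1)) - ∏ i : ZMod k, MvPolynomial.X i) ^ r :
        MvPolynomial (ZMod k) ℤ)) := by
  rw [MvPolynomial.prod_X_add_one_sub_prod_X, MvPolynomial.coeff_sum_prod_X_pow,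
    Mcard_eq_card_filter]

/-- `|ℳ_{p,r}|` is the coefficient of `x_1^{p_1} ⋯ x_k^{p_k}` in the polynomial
`(∏_{i=1}^k (x_i + 1) - ∏_{i=1}^k x_i)^r`. -/
theorem Mcard_eq_coeff (k r : ℕ) [NeZero k] (hr : 0 < r) (p : ZMod k → ℕ) :
    (Mcard k r p : ℤ) =
    MvPolynomial.coeff (Finsupp.equivFunOnFinite.symm p)
      ((((∏ i : ZMod k, (MvPolynomial.X i + 1)) - ∏ i : ZMod k, MvPolynomial.X i) ^ r :
        MvPolynomial (ZMod k) ℤ)) :=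
  Mcard_eq_coeff_general k r p
end

section
/- Let n be a positive integer, let R be a commutative ring, and let w(i,j) ∈ R be given for every i∈[n−1] and j∈[n] with j ≠ i. Let T_n denote the set of spanning trees of the complete digraph on [n] rooted at n, i.e. sets T of arcs (i,j) with i∈[n−1], j∈[n]∖{i}, such that every vertex i∈[n−1] is incident to exactly one outgoing arc of T and T contains no directed cycle. Let L = (L_{i,j})_{i,j∈[n−1]} be the reduced Laplacian matrix defined by L_{i,j} = −w(i,j) for i ≠ j and L_{i,i} = Σ_{j∈[n]∖{i}} w(i,j). Then Σ_{T∈T_n} ∏_{(i,j)∈T} w(i,j) = det(L). -/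
/-!
Write `e_l` for the indicator row of a vertex `l`, with `e_root = 0`. Row `i` of the reduced
Laplacian is `∑_l w(i,l) (e_i - e_l)`, so by multilinearity of the determinant in the rows,
`det L = ∑_t ∏_i w(i, t i) · det E_t`, summed over all parent maps `t`, where `E_t` has rows
`e_i - e_{t i}`.

If `t` is a tree rooted at the root, every nonzero off-diagonal entry of `E_t` points from a
vertex to one strictly closer to the root, so `E_t` is unitriangular for the order by distance
to the root and `det E_t = 1`. Otherwise some vertex never reaches the root, hence the parent
map has a periodic point other than the root; the parent map permutes its periodic points, so
the rows of `E_t` indexed by them telescope to zero and `det E_t = 0`.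
-/

open Finset

namespace Matrix

variable {ι : Type*} [Fintype ι] [DecidableEq ι] {R : Type*} [CommRing R]

theorem det_eq_zero_of_sum_smul_rows_eq_zero (M : Matrix ι ι R) (c : ι → R) {i : ι}
    (hc : IsUnit (c i)) (h : ∑ k, c k • M k = 0) : M.det = 0 := by
  have := det_updateRow_sum M i c
  rwa [h, det_eq_zero_of_row_eq_zero i (by simp), eq_comm, hc.smul_eq_zero] at this

theorem det_eq_prod_diag_of_key_lt {α : Type*} [LinearOrder α] (M : Matrix ι ι R)
    (key : ι → α) (h : ∀ i j, i ≠ j → M i j ≠ 0 → key j < key i) : M.det = ∏ i, M i i := by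
  rw [det_apply', sum_eq_single 1 ?_ (by simp)]
  · simp
  intro σ _ hσ
  obtain ⟨j, hj, hmax⟩ := exists_max_image σ.support key
    (nonempty_iff_ne_empty.mpr (Equiv.Perm.support_eq_empty_iff.not.mpr hσ))
  have hσj : σ j ≠ j := Equiv.Perm.mem_support.mp hj
  have hzero : M (σ j) j = 0 := by
    by_contra hne
    exact (h _ _ hσj hne).not_ge (hmax _ (Equiv.Perm.apply_mem_support.mpr hj))
  exact mul_eq_zero_of_right _ (prod_eq_zero (mem_univ j) hzero)

theorem det_of_sum_smul_rows {κ : Type*} [Fintype κ] (c : ι → κ → R) (U : ι → κ → ι → R) :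
    (of fun i => ∑ l, c i l • U i l).det =
      ∑ t : ι → κ, (∏ i, c i (t i)) * (of fun i => U i (t i)).det := by
  change detRowAlternating.toMultilinearMap (fun i => ∑ l, c i l • U i l) = _
  rw [MultilinearMap.map_sum]
  simp_rw [MultilinearMap.map_smul_univ, smul_eq_mul]
  rfl

end Matrix

theorem Function.exists_iterate_mem_periodicPts {α : Type*} [Finite α] (f : α → α) (x : α) :
    ∃ m, f^[m] x ∈ periodicPts f := by
  obtain ⟨m, n, hne, heq⟩ := Finite.exists_ne_map_eq_of_infinite (f^[·] x)
  wlog hlt : m < n generalizing m n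
  · exact this n m hne.symm heq.symm (by omega)
  refine ⟨m, mk_mem_periodicPts (n := n - m) (by omega) ?_⟩
  rw [IsPeriodicPt, IsFixedPt, ← iterate_add_apply, Nat.sub_add_cancel hlt.le]
  exact heq.symm

namespace MatrixTree

variable {V : Type*} [DecidableEq V] (r : V)

def parentMap (t : {v // v ≠ r} → V) (y : V) : V :=
  if h : y = r then r else t ⟨y, h⟩

def IsRootedTree (t : {v // v ≠ r} → V) : Prop :=
  ∀ x, ∃ m, (parentMap r t)^[m] x = r

/-- The row `e_l`; it vanishes for `l = r`, whose row and column are deleted. -/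
def vertexVec (R : Type*) [CommRing R] (l : V) : {v // v ≠ r} → R :=
  fun j => if l = j.1 then 1 else 0

def treeMatrix [Fintype V] (R : Type*) [CommRing R] (t : {v // v ≠ r} → V) :
    Matrix {v // v ≠ r} {v // v ≠ r} R :=
  Matrix.of fun i => vertexVec r R i.1 - vertexVec r R (t i)

variable (R : Type*) [CommRing R] in
def reducedLaplacian [Fintype V] (w : {v // v ≠ r} → V → R) :
    Matrix {v // v ≠ r} {v // v ≠ r} R :=
  Matrix.of fun i j => if i = j then ∑ l ∈ univ.erase i.1, w i l else -w i j

variable {r} {R : Type*} [CommRing R] {t : {v // v ≠ r} → V}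

@[simp]
theorem parentMap_root : parentMap r t r = r := dif_pos rfl

@[simp]
theorem parentMap_coe (i : {v // v ≠ r}) : parentMap r t i = t i := dif_neg i.2

@[simp]
theorem vertexVec_root : vertexVec r R r = 0 := by
  ext j
  simp [vertexVec, Ne.symm j.2]

theorem IsRootedTree.apply_ne (h : IsRootedTree r t) (i : {v // v ≠ r}) : t i ≠ i := by
  intro hi
  obtain ⟨m, hm⟩ := h i
  rw [Function.iterate_fixed (by simpa using hi)] at hm
  exact i.2 hm

theorem IsRootedTree.find_apply_lt (h : IsRootedTree r t) (i : {v // v ≠ r}) :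
    Nat.find (h (t i)) < Nat.find (h i) := by
  have hreach := Nat.find_spec (h i)
  obtain ⟨k, hk⟩ :=
    Nat.exists_eq_add_one_of_ne_zero ((Nat.find_pos (h i)).mpr (by simpa using i.2)).ne'
  rw [hk, Function.iterate_succ_apply, parentMap_coe] at hreach
  rw [hk]
  exact Nat.lt_succ_of_le (Nat.find_min' _ hreach)

variable [Fintype V]

theorem treeMatrix_row (i : {v // v ≠ r}) :
    treeMatrix r R t i = vertexVec r R i - vertexVec r R (t i) := rfl

theorem det_treeMatrix_of_isRootedTree (h : IsRootedTree r t) : (treeMatrix r R t).det = 1 := by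
  rw [Matrix.det_eq_prod_diag_of_key_lt _ fun i : {v // v ≠ r} => Nat.find (h i)]
  · refine Fintype.prod_eq_one _ fun i => ?_
    simp [treeMatrix, vertexVec, h.apply_ne i]
  intro i j hij hne
  have : t i = j := by
    by_contra h'
    simp [treeMatrix, vertexVec, Subtype.val_inj, hij, h'] at hne
  exact this ▸ h.find_apply_lt i

theorem det_treeMatrix_of_not_isRootedTree (h : ¬IsRootedTree r t) :
    (treeMatrix r R t).det = 0 := by
  classical
  set f := parentMap r t
  obtain ⟨x, hx⟩ : ∃ x, ∀ m, f^[m] x ≠ r := by simpa [IsRootedTree] using h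
  obtain ⟨m, hm⟩ := Function.exists_iterate_mem_periodicPts f x
  set P := univ.filter (· ∈ Function.periodicPts f)
  refine Matrix.det_eq_zero_of_sum_smul_rows_eq_zero _
    (fun k => if k.1 ∈ Function.periodicPts f then 1 else 0) (i := ⟨_, hx m⟩) (by simp [hm]) ?_
  have hperm : ∑ v ∈ P, vertexVec r R (f v) = ∑ v ∈ P, vertexVec r R v := by
    have hbij : Set.BijOn f P P := by simpa [P] using Function.bijOn_periodicPts f
    exact sum_nbij f hbij.mapsTo hbij.injOn hbij.surjOn fun _ _ => rfl
  calc ∑ k : {v // v ≠ r},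
        (if k.1 ∈ Function.periodicPts f then (1 : R) else 0) • treeMatrix r R t k
      = ∑ v, if v ∈ Function.periodicPts f then vertexVec r R v - vertexVec r R (f v) else 0 := by
        rw [Fintype.sum_eq_add_sum_subtype_ne _ r]
        simp [treeMatrix_row, f]
    _ = 0 := by rw [← sum_filter, sum_sub_distrib, hperm, sub_self]

theorem det_treeMatrix [DecidablePred (IsRootedTree r)] :
    (treeMatrix r R t).det = if IsRootedTree r t then 1 else 0 := by
  split_ifs with h
  exacts [det_treeMatrix_of_isRootedTree h, det_treeMatrix_of_not_isRootedTree h]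

theorem reducedLaplacian_eq_sum (w : {v // v ≠ r} → V → R) :
    reducedLaplacian r R w =
      Matrix.of fun i => ∑ l, w i l • (vertexVec r R i - vertexVec r R l) := by
  ext i j
  rcases eq_or_ne i j with rfl | hij
  · simp [reducedLaplacian, vertexVec, mul_sub, sum_sub_distrib, sum_erase_eq_sub]
  · simp [reducedLaplacian, vertexVec, hij, Subtype.val_inj]

theorem det_reducedLaplacian (w : {v // v ≠ r} → V → R) :
    (reducedLaplacian r R w).det = ∑ t, (∏ i, w i (t i)) * (treeMatrix r R t).det := by
  rw [reducedLaplacian_eq_sum, Matrix.det_of_sum_smul_rows]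
  rfl

theorem sum_prod_eq_det_reducedLaplacian [DecidablePred (IsRootedTree r)]
    (w : {v // v ≠ r} → V → R) :
    ∑ t ∈ univ.filter (IsRootedTree r), ∏ i, w i (t i) = (reducedLaplacian r R w).det := by
  simp_rw [det_reducedLaplacian, det_treeMatrix, mul_ite, mul_one, mul_zero, sum_filter]

end MatrixTree

open scoped Classical in
/-- The root `n` of `[n]` is represented by `0 : Fin n`, and a spanning tree by the map sending
each non-root vertex to the head of its outgoing arc. -/
theorem matrix_tree_theorem (n : ℕ) [NeZero n] (R : Type*) [CommRing R]
    (w : {i : Fin n // i ≠ 0} → Fin n → R) :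
    ∑ t ∈ Finset.univ.filter (fun t : {i : Fin n // i ≠ 0} → Fin n =>
        (∀ i : {i : Fin n // i ≠ 0}, t i ≠ i.1) ∧
        ∀ x : Fin n, ∃ m : ℕ,
          (fun y : Fin n => if h : y = 0 then 0 else t ⟨y, h⟩)^[m] x = 0),
      ∏ i : {i : Fin n // i ≠ 0}, w i (t i) =
    Matrix.det (Matrix.of fun i j : {i : Fin n // i ≠ 0} =>
      if i = j then ∑ l ∈ Finset.univ.erase i.1, w i l else - w i j.1) := by
  refine (sum_congr (filter_congr fun t _ => ?_) fun _ _ => rfl).trans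
    (MatrixTree.sum_prod_eq_det_reducedLaplacian w)
  exact and_iff_right_of_imp MatrixTree.IsRootedTree.apply_ne
end

section
/- Let k and r be positive integers with r < k and let p = (p_1,…,p_k) be a tuple of non-negative integers with S_{p,r} non-empty. Let (S,f) be uniformly distributed on Ω. Then the probability that G_α(S,f) is a tree equals Pdet(M_α), where M_α = (M_{α,i,j})_{i,j∈[k]} is the matrix of events with M_{α,i,j} = I^{f(i)}_{i,j} for i∈[k−1], and M_{α,k,j} = Ω for all j∈[k]. -/
open Finset

/-! For fixed `(S,f)` the indicator matrix of `M_α` has row `k` all ones and row `i < k` equal to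
the indicator of the cyclic interval from `i` to `α(i, S_{f(i)}) - 1`, so `Pdet(M_α)` is the
average over `Ω` of the determinants of these `0/1` matrices; it suffices that each determinant is
`1` when `G_α(S,f)` is a tree and `0` otherwise. Replacing each column `j ≠ k` by its difference
with column `j - 1` turns row `k` into `e_k` and row `i` into `e_i - e_{α(i)}` outside column `k`.
If the graph is a tree, ordering the vertices by depth makes this matrix unitriangular; otherwise a
cycle `C` avoiding `k` is permuted by `α`, and `1_C - c • e_k` is a nonzero left kernel vector. -/

namespace Matrix

variable {ι R : Type*} [Fintype ι] [DecidableEq ι] [CommRing R]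

theorem det_one_sub_eq_one_of_lt {α : Type*} [LinearOrder α] (b : ι → α) (Q : Matrix ι ι R)
    (hQ : ∀ i j, Q i j ≠ 0 → b i < b j) : (1 - Q).det = 1 := by
  have hzero : ∀ i j, ¬ b i < b j → Q i j = 0 := fun i j h => not_imp_comm.mp (hQ i j) h
  have hT : (1 - Q).BlockTriangular b := fun i j hji => by
    rw [sub_apply, one_apply_ne (fun h => (h ▸ hji).false), hzero i j (lt_asymm hji), sub_zero]
  refine hT.det.trans (prod_eq_one fun a _ => ?_)
  have : (1 - Q).toSquareBlock b a = 1 := by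
    ext ⟨i, hi⟩ ⟨j, hj⟩
    simp [toSquareBlock_def, one_apply, hzero i j (by rw [hi, hj]; exact lt_irrefl a)]
  rw [this, det_one]

theorem det_eq_zero_of_vecMul_eq_zero {M : Matrix ι ι R} {v : ι → R} (hv : v ᵥ* M = 0) {y : ι}
    (hy : v y = 1) : M.det = 0 := by
  have h := congrArg (· ᵥ* adjugate M) hv
  simp only [vecMul_vecMul, mul_adjugate, vecMul_smul, vecMul_one, zero_vecMul] at h
  simpa [hy] using congrFun h y

end Matrix

section FunctionalGraph

variable {ι : Type*}

def FlowsTo (g : ι → ι) (r : ι) : Prop := ∀ x, ∃ n, g^[n] x = r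

theorem FlowsTo.find_apply_add_one [DecidableEq ι] {g : ι → ι} {r : ι} (h : FlowsTo g r) {x : ι}
    (hx : x ≠ r) :
    Nat.find (h (g x)) + 1 = Nat.find (h x) := by
  rw [eq_comm, Nat.find_eq_iff]
  refine ⟨Nat.find_spec (h (g x)), fun n hn => ?_⟩
  cases n with
  | zero => simpa using hx
  | succ n => exact Nat.find_min (h (g x)) (by omega)

theorem exists_mem_periodicPts_of_not_flowsTo [Finite ι] {g : ι → ι} {r : ι}
    (h : ¬ FlowsTo g r) :
    ∃ y ∈ Function.periodicPts g, ∀ n, g^[n] y ≠ r := by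
  obtain ⟨x, hx⟩ : ∃ x, ∀ n, g^[n] x ≠ r := by simpa [FlowsTo] using h
  obtain ⟨m, n, heq, hlt⟩ : ∃ m n, g^[m] x = g^[n] x ∧ m < n := by
    obtain ⟨m, n, hne, heq⟩ := Finite.exists_ne_map_eq_of_infinite (g^[·] x)
    rcases lt_or_gt_of_ne hne with hlt | hlt
    exacts [⟨m, n, heq, hlt⟩, ⟨n, m, heq.symm, hlt⟩]
  refine ⟨g^[m] x, Function.mk_mem_periodicPts (n := n - m) (by omega) ?_, fun l => ?_⟩
  · rw [Function.IsPeriodicPt, Function.IsFixedPt, ← Function.iterate_add_apply,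
      Nat.sub_add_cancel hlt.le, heq]
  · rw [← Function.iterate_add_apply]
    exact hx _

variable [Fintype ι] [DecidableEq ι] {R : Type*} [CommRing R] {N : Matrix ι ι R} {g : ι → ι}
  {r : ι}

theorem det_eq_one_of_flowsTo (hg : g r = r) (hroot : N r r = 1)
    (hcol : ∀ i c, c ≠ r → N i c = (1 : Matrix ι ι R) i c - if g i = c then 1 else 0)
    (h : FlowsTo g r) : N.det = 1 := by
  -- The entries of `1 - N` sit at `(i, g i)` and `(i, r)` with `i ≠ r`: both columns are closer
  -- to the root, so `1 - N` is strictly triangular for the order by decreasing depth.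
  rw [← sub_sub_cancel 1 N]
  refine Matrix.det_one_sub_eq_one_of_lt (fun x => OrderDual.toDual (Nat.find (h x))) _
    fun i c hic => OrderDual.toDual_lt_toDual.mpr ?_
  have hi : i ≠ r := by
    intro hir
    rw [hir] at hic
    by_cases hc : c = r
    · simp [hc, hroot] at hic
    · simp [hcol r c hc, hg, Ne.symm hc] at hic
  by_cases hc : c = r
  · subst hc
    rw [← h.find_apply_add_one hi, (Nat.find_eq_zero (h c)).mpr rfl]
    omega
  · have : g i = c := by
      by_contra hgi
      simp [hcol i c hc, hgi] at hic
    rw [← h.find_apply_add_one hi, this]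
    omega

theorem det_eq_zero_of_not_flowsTo (hg : g r = r) (hroot : N r r = 1)
    (hcol : ∀ i c, c ≠ r → N i c = (1 : Matrix ι ι R) i c - if g i = c then 1 else 0)
    (h : ¬ FlowsTo g r) : N.det = 0 := by
  classical
  set C := (Function.periodicPts g \ {r}).toFinset
  have hC : Set.BijOn g C C := by
    simpa [C, hg] using (Function.bijOn_periodicPts g).sdiff_singleton
      (Function.mk_mem_periodicPts one_pos hg)
  obtain ⟨y, hyper, hyr⟩ := exists_mem_periodicPts_of_not_flowsTo h
  have hyC : y ∈ C := by simpa [C] using ⟨hyper, hyr 0⟩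
  have hsum : ∀ c, c ≠ r → ∑ i ∈ C, N i c = 0 := by
    intro c hc
    have hperm : ∑ i ∈ C, (if g i = c then (1 : R) else 0) = ∑ i ∈ C, if i = c then 1 else 0 :=
      Finset.sum_nbij g hC.mapsTo hC.injOn hC.surjOn fun _ _ => rfl
    simp only [hcol _ c hc, Finset.sum_sub_distrib, Matrix.one_apply, hperm, sub_self]
  refine Matrix.det_eq_zero_of_vecMul_eq_zero (v := fun i => (if i ∈ C then 1 else 0) -
    if i = r then ∑ j ∈ C, N j r else 0) ?_ (y := y) (by simp [hyC, show y ≠ r from hyr 0])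
  ext c
  by_cases hc : c = r
  · simp [Matrix.vecMul, dotProduct, sub_mul, ite_mul, Finset.sum_sub_distrib, hc, hroot]
  · simp [Matrix.vecMul, dotProduct, sub_mul, ite_mul, Finset.sum_sub_distrib, hsum c hc,
      hcol r c hc, hg, Ne.symm hc]

open Classical in
theorem det_eq_ite_flowsTo (hg : g r = r) (hroot : N r r = 1)
    (hcol : ∀ i c, c ≠ r → N i c = (1 : Matrix ι ι R) i c - if g i = c then 1 else 0) :
    N.det = if FlowsTo g r then 1 else 0 := by
  split_ifs with h
  exacts [det_eq_one_of_flowsTo hg hroot hcol h, det_eq_zero_of_not_flowsTo hg hroot hcol h]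

end FunctionalGraph

namespace ZMod

variable {k : ℕ} [NeZero k]

theorem val_neg_one' : (-1 : ZMod k).val = k - 1 := by
  obtain ⟨n, rfl⟩ := Nat.exists_eq_succ_of_ne_zero (NeZero.ne k)
  exact val_neg_one n

theorem val_sub_one_of_ne_zero {a : ZMod k} (ha : a ≠ 0) : (a - 1).val = a.val - 1 := by
  have ha' := val_pos.mpr ha
  have h1 : (1 : ZMod k).val = 1 := by
    rw [val_one_eq_one_mod]
    exact Nat.mod_eq_of_lt (by have := a.val_lt; omega)
  rw [val_sub (by omega), h1]

end ZMod

section CyclicInterval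

variable {k : ℕ} [NeZero k]

theorem mem_cyc {i j x : ZMod k} :
    x ∈ cyc k i j ↔ 1 ≤ (x - i).val ∧ (x - i).val ≤ (j - i).val := by
  simp [cyc]

theorem exists_alphaRel (S : Finset (ZMod k)) (i : ZMod k) : ∃ a, alphaRel k S i a := by
  by_cases hS : S = univ
  · exact ⟨i, by simp [alphaRel, hS]⟩
  obtain ⟨z, hz⟩ : ∃ z, z ∉ S := by simpa [Finset.eq_univ_iff_forall] using hS
  obtain ⟨a, ha, hmin⟩ := (univ.filter (· ∉ S)).exists_min_image (fun a => (a - 1 - i).val)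
    ⟨z, by simpa using hz⟩
  refine ⟨a, ?_⟩
  simp only [alphaRel, hS, if_false]
  refine ⟨by simpa using ha, fun x hx => ?_⟩
  rw [mem_cyc] at hx
  by_contra hxS
  have hx0 : x - i ≠ 0 := by rintro h; simp [h] at hx
  have := hmin x (by simpa using hxS)
  rw [show x - 1 - i = x - i - 1 by ring, ZMod.val_sub_one_of_ne_zero hx0] at this
  omega

theorem cyc_subset_iff_of_alphaRel {S : Finset (ZMod k)} {i a : ZMod k} (h : alphaRel k S i a)
    (j : ZMod k) : cyc k i j ⊆ S ↔ (j - i).val ≤ (a - 1 - i).val := by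
  by_cases hS : S = univ
  · simp only [alphaRel, hS, if_true] at h
    simp [hS, h, ZMod.val_neg_one', Nat.le_sub_one_of_lt (j - i).val_lt]
  simp only [alphaRel, hS, if_false] at h
  refine ⟨fun hj => ?_, fun hj x hx => h.2 ?_⟩
  · by_contra hlt
    have hai : a - i ≠ 0 := by
      intro hai
      rw [show a - 1 - i = a - i - 1 by ring, hai, zero_sub, ZMod.val_neg_one'] at hlt
      have := (j - i).val_lt
      omega
    rw [show a - 1 - i = a - i - 1 by ring, ZMod.val_sub_one_of_ne_zero hai] at hlt
    exact h.1 (hj (mem_cyc.mpr ⟨ZMod.val_pos.mpr hai, by omega⟩))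
  · rw [mem_cyc] at hx ⊢
    omega

theorem alphaRel_unique {S : Finset (ZMod k)} {i a b : ZMod k} (ha : alphaRel k S i a)
    (hb : alphaRel k S i b) : a = b := by
  have key (j : ZMod k) : (j - i).val ≤ (a - 1 - i).val ↔ (j - i).val ≤ (b - 1 - i).val :=
    (cyc_subset_iff_of_alphaRel ha j).symm.trans (cyc_subset_iff_of_alphaRel hb j)
  have h := ZMod.val_injective k (le_antisymm ((key _).mp le_rfl) ((key _).mpr le_rfl))
  simpa using h

end CyclicInterval

section CycIntervalMatrix

variable {k : ℕ} [NeZero k] (R : Type*) [CommRing R]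

-- Row `i` is the indicator of the cyclic interval from `i` to `g i - 1` (all of `ZMod k` when
-- `g i = i`).
def cycIntervalMatrix (g : ZMod k → ZMod k) : Matrix (ZMod k) (ZMod k) R :=
  Matrix.of fun i j => if (j - i).val ≤ (g i - 1 - i).val then 1 else 0

def predShiftMatrix : Matrix (ZMod k) (ZMod k) R :=
  Matrix.of fun a c => if c ≠ 0 ∧ a = c - 1 then 1 else 0

theorem det_one_sub_predShiftMatrix : (1 - predShiftMatrix (k := k) R).det = 1 :=
  Matrix.det_one_sub_eq_one_of_lt ZMod.val _ fun a c h => by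
    obtain ⟨hc, rfl⟩ : c ≠ 0 ∧ a = c - 1 := by
      by_contra hn
      simp [predShiftMatrix, hn] at h
    rw [ZMod.val_sub_one_of_ne_zero hc]
    have := ZMod.val_pos.mpr hc
    omega

variable {R}

theorem mul_one_sub_predShiftMatrix_apply (M : Matrix (ZMod k) (ZMod k) R) (i c : ZMod k) :
    (M * (1 - predShiftMatrix R) : Matrix (ZMod k) (ZMod k) R) i c =
      M i c - if c = 0 then 0 else M i (c - 1) := by
  by_cases hc : c = 0 <;>
    simp [Matrix.mul_apply, predShiftMatrix, Matrix.one_apply, hc, mul_sub, Finset.sum_sub_distrib]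

theorem cycIntervalMatrix_add_one_sub (g : ZMod k → ZMod k) (i x : ZMod k) :
    cycIntervalMatrix R g i (x + 1) - cycIntervalMatrix R g i x =
      (if i = x + 1 then 1 else 0) - if g i = x + 1 then 1 else 0 := by
  have hi : i = x + 1 ↔ (x + 1 - i).val = 0 := by
    rw [ZMod.val_eq_zero, sub_eq_zero, eq_comm]
  have hg : g i = x + 1 ↔ (g i - 1 - i).val = (x - i).val := by
    rw [(ZMod.val_injective k).eq_iff, sub_left_inj, sub_eq_iff_eq_add]
  have hx : (x - i).val = if x + 1 - i = 0 then k - 1 else (x + 1 - i).val - 1 := by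
    rw [show x - i = x + 1 - i - 1 by ring]
    split_ifs with h
    · rw [h, zero_sub, ZMod.val_neg_one']
    · exact ZMod.val_sub_one_of_ne_zero h
  have := (g i - 1 - i).val_lt
  simp only [cycIntervalMatrix, Matrix.of_apply, hi, hg, hx, ← ZMod.val_eq_zero]
  split_ifs <;> first | (exfalso; omega) | norm_num

theorem cycIntervalMatrix_zero_apply {g : ZMod k → ZMod k} (hg : g 0 = 0) (j : ZMod k) :
    cycIntervalMatrix R g 0 j = 1 := by
  simp [cycIntervalMatrix, hg, ZMod.val_neg_one', Nat.le_sub_one_of_lt j.val_lt]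

open Classical in
theorem det_cycIntervalMatrix {g : ZMod k → ZMod k} (hg : g 0 = 0) :
    (cycIntervalMatrix R g).det = if FlowsTo g 0 then 1 else 0 := by
  rw [← det_eq_ite_flowsTo (N := cycIntervalMatrix R g * (1 - predShiftMatrix R)) hg,
    Matrix.det_mul, det_one_sub_predShiftMatrix, mul_one]
  · simp [mul_one_sub_predShiftMatrix_apply, cycIntervalMatrix_zero_apply hg]
  · intro i c hc
    rw [mul_one_sub_predShiftMatrix_apply, if_neg hc, Matrix.one_apply]
    simpa using cycIntervalMatrix_add_one_sub g i (c - 1)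

end CycIntervalMatrix

open Classical in
theorem Pdet_eq_sum_det {k : ℕ} [NeZero k] {Om : Type} [Fintype Om]
    (E : ZMod k → ZMod k → Set Om) :
    Pdet E = (∑ om, (Matrix.of fun i j => if om ∈ E i j then (1 : ℚ) else 0).det) /
      Nat.card Om := by
  have hcard (π : Equiv.Perm (ZMod k)) : (Nat.card (⋂ i, E i (π i) : Set Om) : ℚ) =
      ∑ om, ∏ i, if om ∈ E i (π i) then (1 : ℚ) else 0 := by
    simp [Nat.card_eq_fintype_card, Fintype.card_subtype, Finset.prod_boole]
  simp only [Pdet, PrU, hcard, ← Matrix.det_transpose (Matrix.of _), Matrix.det_apply',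
    Matrix.transpose_apply, Matrix.of_apply, mul_div_assoc', ← Finset.sum_div, Finset.mul_sum]
  rw [Finset.sum_comm]

section Alpha

variable {k r : ℕ} [NeZero k]

theorem exists_alpha_arcs (S : Fin r → Finset (ZMod k)) (f : {i : ZMod k // i ≠ 0} → Fin r) :
    ∃ g : ZMod k → ZMod k,
      g 0 = 0 ∧ ∀ i : {i : ZMod k // i ≠ 0}, alphaRel k (S (f i)) i.1 (g i.1) := by
  classical
  choose a ha using fun i : {i : ZMod k // i ≠ 0} => exists_alphaRel (S (f i)) i.1
  refine ⟨fun x => if hx : x = 0 then 0 else a ⟨x, hx⟩, by simp, fun i => ?_⟩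
  simpa [dif_neg i.2] using ha i

theorem GIsTree_alphaRel_iff {S : Fin r → Finset (ZMod k)} {f : {i : ZMod k // i ≠ 0} → Fin r}
    {g : ZMod k → ZMod k} (hg : g 0 = 0)
    (harc : ∀ i : {i : ZMod k // i ≠ 0}, alphaRel k (S (f i)) i.1 (g i.1)) :
    GIsTree k r (alphaRel k) S f ↔ FlowsTo g 0 := by
  refine ⟨fun ⟨g', hg', harc', h⟩ => ?_, fun h => ⟨g, hg, harc, h⟩⟩
  obtain rfl : g' = g := funext fun x => by
    by_cases hx : x = 0
    · rw [hx, hg, hg']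
    · exact alphaRel_unique (harc' ⟨x, hx⟩) (harc ⟨x, hx⟩)
  exact h

open Classical in
theorem det_Malpha_indicator {p : ZMod k → ℕ} (R : Type*) [CommRing R] (om : OmS k r p) :
    (Matrix.of fun i j => if om ∈ Malpha k r p i j then (1 : R) else 0).det =
      if GIsTree k r (alphaRel k) om.1.1 om.1.2 then 1 else 0 := by
  obtain ⟨g, hg, harc⟩ := exists_alpha_arcs om.1.1 om.1.2
  have hM : (Matrix.of fun i j => if om ∈ Malpha k r p i j then (1 : R) else 0) =
      cycIntervalMatrix R g := by
    ext i j
    by_cases hi : i = 0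
    · simp [hi, Malpha, cycIntervalMatrix_zero_apply hg]
    · simp [Malpha, hi, cycIntervalMatrix, cyc_subset_iff_of_alphaRel (harc ⟨i, hi⟩)]
  simp only [hM, det_cycIntervalMatrix hg, GIsTree_alphaRel_iff hg harc]

end Alpha

theorem prob_tree_alpha_eq_Pdet_general (k r : ℕ) [NeZero k]
    (p : ZMod k → ℕ) :
    (Nat.card {om : OmS k r p // GIsTree k r (alphaRel k) om.1.1 om.1.2} : ℚ) /
      (Nat.card (OmS k r p) : ℚ) = Pdet (Malpha k r p) := by
  classical
  rw [Pdet_eq_sum_det]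
  simp only [det_Malpha_indicator, Finset.sum_boole, Nat.card_eq_fintype_card, Fintype.card_subtype]

/-- For `(S,f)` uniform on `Ω` (pairs of a tuple in `𝒮_{p,r}` and a surjection
`[k-1] → [r]`), the probability that `G_α(S,f)` is a tree equals `Pdet(M_α)`. -/
theorem prob_tree_alpha_eq_Pdet (k r : ℕ) [NeZero k] (hr : 0 < r) (hrk : r < k)
    (p : ZMod k → ℕ)
    (hS : Nonempty {S : Fin r → Finset (ZMod k) // SprMem k r p S}) :
    (Nat.card {om : OmS k r p // GIsTree k r (alphaRel k) om.1.1 om.1.2} : ℚ) /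
      (Nat.card (OmS k r p) : ℚ) = Pdet (Malpha k r p) :=
  prob_tree_alpha_eq_Pdet_general k r p
end

section
/- Let k and r be positive integers with r < k and let p = (p_1,…,p_k) be a tuple of non-negative integers with S_{p,r} non-empty. Then the probability, for (S,f) uniform on Ω, of the event { for all i∈[k−1], S_{f(i)} ≠ [k], and k ∉ S_{f(k−1)} } equals (|M_{p,r}| / |S_{p,r}|) · (1 − p_k/r). -/
open Finset

open Function

/-!
Since `f` is surjective, the event forces `S ∈ ℳ_{p,r}`, and then only asks that `f` send `e`
to one of the `r - p_k` indices `i` with `k ∉ S_i`. Composing with transpositions of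
`[r]` shows that the value at `e` of a uniformly random surjection is uniform on `[r]`, so the
conditional probability of the latter requirement is `(r - p_k) / r`.
-/

section Surjections

variable {α β : Type*} (a : α)

lemma card_surjective_apply_eq_congr [DecidableEq β] (b b' : β) :
    Nat.card {f : α → β // Surjective f ∧ f a = b} =
      Nat.card {f : α → β // Surjective f ∧ f a = b'} :=
  Nat.card_congr
    { toFun := fun f =>
        ⟨Equiv.swap b b' ∘ f.1, (Equiv.swap b b').surjective.comp f.2.1, by simp [f.2.2]⟩
      invFun := fun f =>
        ⟨Equiv.swap b b' ∘ f.1, (Equiv.swap b b').surjective.comp f.2.1, by simp [f.2.2]⟩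
      left_inv := fun f => by ext; simp
      right_inv := fun f => by ext; simp }

def surjectiveApplySigmaEquiv (t : β → Prop) :
    {f : α → β // Surjective f ∧ t (f a)} ≃
      Σ b : {b // t b}, {f : α → β // Surjective f ∧ f a = b} where
  toFun f := ⟨⟨f.1 a, f.2.2⟩, ⟨f.1, f.2.1, rfl⟩⟩
  invFun x := ⟨x.2.1, x.2.2.1, by rw [x.2.2.2]; exact x.1.2⟩
  left_inv _ := rfl
  right_inv := by
    rintro ⟨⟨b, hb⟩, f, hf, hfb⟩
    obtain rfl : f a = b := hfb
    rfl

lemma card_surjective_apply_eq_pos [Fintype α] [Fintype β] (b₀ : β)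
    (h : Fintype.card β ≤ Fintype.card α) :
    0 < Nat.card {f : α → β // Surjective f ∧ f a = b₀} := by
  classical
  obtain ⟨f, hf⟩ := exists_surjective_iff.2
    ⟨⟨fun _ => b₀⟩, Function.Embedding.nonempty_of_card_le h⟩
  exact Nat.card_pos_iff.2
    ⟨⟨⟨Equiv.swap (f a) b₀ ∘ f, (Equiv.swap _ _).surjective.comp hf, by simp⟩⟩, inferInstance⟩

variable [Finite α] [Fintype β] [DecidableEq β]

lemma card_surjective_apply_mem (t : β → Prop) (b₀ : β) :
    Nat.card {f : α → β // Surjective f ∧ t (f a)} =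
      Nat.card {b // t b} * Nat.card {f : α → β // Surjective f ∧ f a = b₀} := by
  classical
  rw [Nat.card_congr (surjectiveApplySigmaEquiv a t), Nat.card_sigma]
  simp_rw [card_surjective_apply_eq_congr a _ b₀]
  rw [sum_const, card_univ, smul_eq_mul, ← Nat.card_eq_fintype_card]

lemma card_surjective_eq_card_mul (b₀ : β) :
    Nat.card {f : α → β // Surjective f} =
      Fintype.card β * Nat.card {f : α → β // Surjective f ∧ f a = b₀} := by
  simpa using card_surjective_apply_mem a (fun _ => True) b₀

end Surjections

section SampleSpace

variable {k r : ℕ} [NeZero k] {p : ZMod k → ℕ}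

lemma SprMem.card_notMem_add {S : Fin r → Finset (ZMod k)} (hS : SprMem k r p S)
    (j : ZMod k) : Nat.card {i : Fin r // j ∉ S i} + p j = r := by
  rw [← hS j, add_comm, ← Nat.card_sum, Nat.card_congr (Equiv.sumCompl _), Nat.card_fin]

lemma card_omS : Nat.card (OmS k r p) =
    Scard k r p * Nat.card {f : {i : ZMod k // i ≠ 0} → Fin r // Surjective f} := by
  rw [Nat.card_congr (Equiv.subtypeProdEquivProd (p := SprMem k r p) (q := Surjective)),
    Nat.card_prod, Scard]

def properEventEquiv (e : {i : ZMod k // i ≠ 0}) (j : ZMod k) :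
    {om : OmS k r p | (∀ i, om.1.1 (om.1.2 i) ≠ Finset.univ) ∧ j ∉ om.1.1 (om.1.2 e)} ≃
      Σ S : {S // MprMem k r p S},
        {f : {i : ZMod k // i ≠ 0} → Fin r // Surjective f ∧ j ∉ S.1 (f e)} where
  toFun om := ⟨⟨om.1.1.1, om.1.2.1, om.1.2.2.forall.2 om.2.1⟩, ⟨om.1.1.2, om.1.2.2, om.2.2⟩⟩
  invFun x := ⟨⟨⟨x.1.1, x.2.1⟩, ⟨x.1.2.1, x.2.2.1⟩⟩, ⟨fun _ => x.1.2.2 _, x.2.2.2⟩⟩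
  left_inv _ := rfl
  right_inv _ := rfl

lemma card_properEvent (e : {i : ZMod k // i ≠ 0}) (j : ZMod k) (b₀ : Fin r) :
    (Nat.card {om : OmS k r p |
        (∀ i, om.1.1 (om.1.2 i) ≠ Finset.univ) ∧ j ∉ om.1.1 (om.1.2 e)} : ℚ) =
      Mcard k r p * ((r - p j) *
        Nat.card {f : {i : ZMod k // i ≠ 0} → Fin r // Surjective f ∧ f e = b₀}) := by
  classical
  rw [Nat.card_congr (properEventEquiv e j), Nat.card_sigma, Nat.cast_sum]
  have hfiber (S : {S // MprMem k r p S}) :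
      (Nat.card {f : {i : ZMod k // i ≠ 0} → Fin r // Surjective f ∧ j ∉ S.1 (f e)} : ℚ) =
        (r - p j) * Nat.card {f : {i : ZMod k // i ≠ 0} → Fin r // Surjective f ∧ f e = b₀} := by
    rw [card_surjective_apply_mem e (fun i => j ∉ S.1 i) b₀, Nat.cast_mul]
    congr 1
    rw [eq_sub_iff_add_eq]
    exact_mod_cast S.2.1.card_notMem_add j
  rw [sum_congr rfl fun S _ => hfiber S, sum_const, card_univ, nsmul_eq_mul,
    ← Nat.card_eq_fintype_card, Mcard]

end SampleSpace

theorem prob_proper_and_not_mem_general (k r : ℕ) [NeZero k] (hr : 0 < r) (hrk : r < k)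
    (p : ZMod k → ℕ)
    (e : {i : ZMod k // i ≠ 0}) :
    PrU {om : OmS k r p |
        (∀ i : {i : ZMod k // i ≠ 0}, om.1.1 (om.1.2 i) ≠ Finset.univ) ∧
        (0 : ZMod k) ∉ om.1.1 (om.1.2 e)} =
    ((Mcard k r p : ℚ) / (Scard k r p : ℚ)) * (1 - (p 0 : ℚ) / (r : ℚ)) := by
  set b₀ : Fin r := ⟨0, hr⟩
  have hcard : Fintype.card (Fin r) ≤ Fintype.card {i : ZMod k // i ≠ 0} := by
    rw [Fintype.card_fin, Fintype.card_subtype_compl, Fintype.card_subtype_eq, ZMod.card]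
    omega
  have hfiber_pos := card_surjective_apply_eq_pos e b₀ hcard
  rw [PrU, card_properEvent e 0 b₀, card_omS, card_surjective_eq_card_mul e b₀, Fintype.card_fin]
  push_cast
  rw [mul_div_mul_comm, mul_div_mul_right _ _ (by positivity), sub_div, div_self (by positivity)]

/-- Lemma 7 (end of proof): for `(S,f)` uniform on `Ω`, the probability of the event
"for all `i ∈ [k-1]`, `S_{f(i)} ≠ [k]`, and `k ∉ S_{f(k-1)}`" equals
`(|ℳ_{p,r}| / |𝒮_{p,r}|) · (1 - p_k / r)`. Here `e` denotes the element `k-1`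
of `[k-1]` (i.e. `-1 : ZMod k`) and `0 : ZMod k` represents the element `k`. -/
theorem prob_proper_and_not_mem (k r : ℕ) [NeZero k] (hr : 0 < r) (hrk : r < k)
    (p : ZMod k → ℕ)
    (hS : Nonempty {S : Fin r → Finset (ZMod k) // SprMem k r p S})
    (e : {i : ZMod k // i ≠ 0}) (he : e.1 = -1) :
    PrU {om : OmS k r p |
        (∀ i : {i : ZMod k // i ≠ 0}, om.1.1 (om.1.2 i) ≠ Finset.univ) ∧
        (0 : ZMod k) ∉ om.1.1 (om.1.2 e)} =
    ((Mcard k r p : ℚ) / (Scard k r p : ℚ)) * (1 - (p 0 : ℚ) / (r : ℚ)) :=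
  prob_proper_and_not_mem_general k r hr hrk p e
end
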